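/- For odd m ≥ 1 define K_m(x) = E[exp(−2m·(x·B₁)^+)·sgn(B₁) | B₀ = x] = ∫_ℝ exp(−2m(xy)^+)·sgn(y)·(2π)^{−1/2}exp(−(x−y)²/2) dy. Then K_m(x) = sgn(x)·exp(2x²m(m−1))·Φ(−(2m−1)|x|) − sgn(x)·Φ(−|x|), where Φ is the standard normal CDF. Similarly K̂_m(x) := ∫_ℝ exp(−2m(xy)^+)·sgn(x)·(2π)^{−1/2}exp(−(x−y)²/2) dy = sgn(x)·exp(2x²m(m−1))·Φ(−(2m−1)|x|) + sgn(x)·Φ(−|x|). -/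
import Mathlib


open Real MeasureTheory Set

/-- Standard normal cumulative distribution function. -/
noncomputable def Phi (z : ℝ) : ℝ :=
  ∫ u in Iic z, (Real.sqrt (2 * Real.pi))⁻¹ * Real.exp (-u ^ 2 / 2)

/-- `K_m(x) = ∫ exp(−2m(xy)⁺)·sgn(y)·(2π)^{−1/2}·exp(−(x−y)²/2) dy`. -/
noncomputable def Kfun (m : ℕ) (x : ℝ) : ℝ :=
  ∫ y : ℝ, Real.exp (-2 * m * max 0 (x * y)) * Real.sign y *
    (Real.sqrt (2 * Real.pi))⁻¹ * Real.exp (-(x - y) ^ 2 / 2)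

/-- `K̂_m(x) = ∫ exp(−2m(xy)⁺)·sgn(x)·(2π)^{−1/2}·exp(−(x−y)²/2) dy`. -/
noncomputable def Khat (m : ℕ) (x : ℝ) : ℝ :=
  ∫ y : ℝ, Real.exp (-2 * m * max 0 (x * y)) * Real.sign x *
    (Real.sqrt (2 * Real.pi))⁻¹ * Real.exp (-(x - y) ^ 2 / 2)

namespace KAux

/-- The standard normal density. -/
noncomputable def g (u : ℝ) : ℝ := (Real.sqrt (2 * Real.pi))⁻¹ * Real.exp (-u ^ 2 / 2)

lemma g_even (u : ℝ) : g (-u) = g u := by simp [g, neg_sq]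

lemma sqrt_ne : Real.sqrt (2 * Real.pi) ≠ 0 := by positivity

lemma g_int : Integrable g := by
  have h : Integrable (fun u : ℝ => Real.exp (-(1 / 2 : ℝ) * u ^ 2)) :=
    integrable_exp_neg_mul_sq (by norm_num)
  have e : g = fun u => (Real.sqrt (2 * Real.pi))⁻¹ * Real.exp (-(1 / 2 : ℝ) * u ^ 2) := by
    funext u
    rw [g, show -u ^ 2 / 2 = -(1 / 2 : ℝ) * u ^ 2 by ring]
  rw [e]
  exact h.const_mul _

lemma g_total : ∫ u, g u = 1 := by
  have h := integral_gaussian (1 / 2 : ℝ)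
  rw [show (Real.pi / (1 / 2) : ℝ) = 2 * Real.pi by ring] at h
  have e : ∀ u : ℝ, g u = (Real.sqrt (2 * Real.pi))⁻¹ * Real.exp (-(1 / 2 : ℝ) * u ^ 2) :=
    fun u => by rw [g, show -u ^ 2 / 2 = -(1 / 2 : ℝ) * u ^ 2 by ring]
  simp_rw [e]
  rw [integral_const_mul, h, inv_mul_cancel₀ sqrt_ne]

lemma setint_shift (s : Set ℝ) (c : ℝ) (f : ℝ → ℝ) :
    ∫ x in (fun x : ℝ => x + c) ⁻¹' s, f (x + c) = ∫ x in s, f x := by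
  have A : MeasurableEmbedding (fun x : ℝ => x + c) :=
    (Homeomorph.addRight c).isClosedEmbedding.measurableEmbedding
  have h := A.setIntegral_map (μ := volume) f s
  rw [map_add_right_eq_self] at h
  exact h.symm

lemma shift_Ioi (a c : ℝ) (f : ℝ → ℝ) :
    ∫ x in Ioi a, f (x + c) = ∫ x in Ioi (a + c), f x := by
  have h := setint_shift (Ioi (a + c)) c f
  have e : (fun x : ℝ => x + c) ⁻¹' Ioi (a + c) = Ioi a := by
    ext t; simp
  rwa [e] at h

lemma shift_Iio (a c : ℝ) (f : ℝ → ℝ) :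
    ∫ x in Iio a, f (x + c) = ∫ x in Iio (a + c), f x := by
  have h := setint_shift (Iio (a + c)) c f
  have e : (fun x : ℝ => x + c) ⁻¹' Iio (a + c) = Iio a := by
    ext t; simp
  rwa [e] at h

lemma Phi_def (z : ℝ) : Phi z = ∫ u in Iic z, g u := rfl

lemma int_Ioi_g (c : ℝ) : ∫ u in Ioi c, g u = Phi (-c) := by
  have h := integral_comp_neg_Iic (-c) g
  rw [neg_neg] at h
  simp_rw [g_even] at h
  rw [Phi_def]
  exact h.symm

lemma int_Iio_g_shift (x : ℝ) : ∫ y in Iio (0 : ℝ), g (x - y) = Phi (-x) := by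
  have e : ∀ y : ℝ, g (x - y) = g (y + -x) := fun y => by
    rw [← g_even (y + -x)]; congr 1; ring
  simp_rw [e]
  rw [shift_Iio 0 (-x) g, zero_add, Phi_def, integral_Iic_eq_integral_Iio]

lemma meas_sign : Measurable Real.sign := by
  have e : Real.sign = fun r : ℝ => if r < 0 then (-1 : ℝ) else if 0 < r then 1 else 0 := by
    funext r; rfl
  rw [e]
  exact Measurable.ite (measurableSet_lt measurable_id measurable_const) measurable_const
    (Measurable.ite (measurableSet_lt measurable_const measurable_id) measurable_const
      measurable_const)

lemma sign_abs_le (r : ℝ) : |Real.sign r| ≤ 1 := by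
  rcases Real.sign_apply_eq r with h | h | h <;> rw [h] <;> norm_num

/-- Integrability of the integrand for any bounded measurable weight. -/
lemma Kint_gen (m : ℕ) (x : ℝ) (w : ℝ → ℝ) (hw : Measurable w) (hwb : ∀ y, |w y| ≤ 1) :
    Integrable (fun y : ℝ => Real.exp (-2 * m * max 0 (x * y)) * w y *
      (Real.sqrt (2 * Real.pi))⁻¹ * Real.exp (-(x - y) ^ 2 / 2)) := by
  have hb : Integrable (fun y : ℝ => g (y + -x)) := by
    have := (measurePreserving_add_right volume (-x)).integrable_comp_emb
      (Homeomorph.addRight (-x)).isClosedEmbedding.measurableEmbedding (g := g)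
    exact this.mpr g_int
  have hm : AEStronglyMeasurable (fun y : ℝ => Real.exp (-2 * m * max 0 (x * y)) * w y *
      (Real.sqrt (2 * Real.pi))⁻¹ * Real.exp (-(x - y) ^ 2 / 2)) volume := by
    apply Measurable.aestronglyMeasurable
    apply Measurable.mul
    apply Measurable.mul
    apply Measurable.mul
    · exact (Real.measurable_exp.comp
        ((measurable_const.max (measurable_id.const_mul x)).const_mul (-2 * m)))
    · exact hw
    · exact measurable_const
    · exact Real.measurable_exp.comp ((((measurable_id.const_sub x).pow_const 2).neg).div_const 2)
  refine hb.mono' hm ?_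
  filter_upwards with y
  have h1 : ‖Real.exp (-2 * m * max 0 (x * y))‖ ≤ 1 := by
    rw [Real.norm_eq_abs, abs_of_pos (Real.exp_pos _)]
    apply Real.exp_le_one_iff.mpr
    have h0 : (0 : ℝ) ≤ 2 * m * max 0 (x * y) := by positivity
    linarith
  have h2 : ‖w y‖ ≤ 1 := by rw [Real.norm_eq_abs]; exact hwb y
  have hrw : g (y + -x) = (Real.sqrt (2 * Real.pi))⁻¹ * Real.exp (-(x - y) ^ 2 / 2) := by
    rw [g]; congr 2; ring
  rw [norm_mul, norm_mul, norm_mul, hrw]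
  have h3 : ‖(Real.sqrt (2 * Real.pi))⁻¹‖ = (Real.sqrt (2 * Real.pi))⁻¹ := by
    rw [Real.norm_eq_abs, abs_of_pos]; positivity
  have h4 : ‖Real.exp (-(x - y) ^ 2 / 2)‖ = Real.exp (-(x - y) ^ 2 / 2) := by
    rw [Real.norm_eq_abs, abs_of_pos (Real.exp_pos _)]
  rw [h3, h4]
  have h12 : ‖Real.exp (-2 * m * max 0 (x * y))‖ * ‖w y‖ ≤ 1 := by
    calc ‖Real.exp (-2 * m * max 0 (x * y))‖ * ‖w y‖ ≤ 1 * 1 :=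
          mul_le_mul h1 h2 (norm_nonneg _) zero_le_one
      _ = 1 := mul_one 1
  calc ‖Real.exp (-2 * m * max 0 (x * y))‖ * ‖w y‖ * (Real.sqrt (2 * Real.pi))⁻¹ *
        Real.exp (-(x - y) ^ 2 / 2)
      ≤ 1 * (Real.sqrt (2 * Real.pi))⁻¹ * Real.exp (-(x - y) ^ 2 / 2) := by
        apply mul_le_mul_of_nonneg_right _ (Real.exp_pos _).le
        exact mul_le_mul_of_nonneg_right h12 (by positivity)
    _ = (Real.sqrt (2 * Real.pi))⁻¹ * Real.exp (-(x - y) ^ 2 / 2) := by ring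

/-- Completing the square on the positive half line. -/
lemma int_Ioi_exp (m : ℕ) {x : ℝ} (hx : 0 < x) :
    ∫ y in Ioi (0 : ℝ), Real.exp (-2 * m * max 0 (x * y)) * g (x - y)
      = Real.exp (2 * x ^ 2 * m * ((m : ℝ) - 1)) * Phi (-(2 * (m : ℝ) - 1) * x) := by
  have e : EqOn (fun y : ℝ => Real.exp (-2 * m * max 0 (x * y)) * g (x - y))
      (fun y : ℝ => Real.exp (2 * x ^ 2 * m * ((m : ℝ) - 1)) *
        g (y + (2 * (m : ℝ) - 1) * x)) (Ioi 0) := by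
    intro y hy
    have hmax : max 0 (x * y) = x * y := max_eq_right (le_of_lt (mul_pos hx hy))
    have key : Real.exp (-2 * m * (x * y)) * Real.exp (-(x - y) ^ 2 / 2)
        = Real.exp (2 * x ^ 2 * m * ((m : ℝ) - 1)) *
          Real.exp (-(y + (2 * (m : ℝ) - 1) * x) ^ 2 / 2) := by
      rw [← Real.exp_add, ← Real.exp_add]; congr 1; ring
    simp only [g, hmax]
    rw [mul_left_comm, mul_left_comm (Real.exp (2 * x ^ 2 * m * ((m : ℝ) - 1))), key]
  rw [setIntegral_congr_fun measurableSet_Ioi e, integral_const_mul,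
    shift_Ioi 0 ((2 * (m : ℝ) - 1) * x) g, zero_add, int_Ioi_g, neg_mul]

/-- The value of `Kfun` for positive `x`. -/
lemma Kfun_pos (m : ℕ) {x : ℝ} (hx : 0 < x) :
    Kfun m x = Real.exp (2 * x ^ 2 * m * ((m : ℝ) - 1)) * Phi (-(2 * (m : ℝ) - 1) * x)
      - Phi (-x) := by
  have hint := Kint_gen m x Real.sign meas_sign sign_abs_le
  rw [Kfun, ← intervalIntegral.integral_Iic_add_Ioi (b := (0 : ℝ)) hint.integrableOn hint.integrableOn]
  have h1 : ∫ y in Iic (0 : ℝ), Real.exp (-2 * m * max 0 (x * y)) * Real.sign y *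
      (Real.sqrt (2 * Real.pi))⁻¹ * Real.exp (-(x - y) ^ 2 / 2) = -Phi (-x) := by
    rw [integral_Iic_eq_integral_Iio]
    have e : EqOn (fun y : ℝ => Real.exp (-2 * m * max 0 (x * y)) * Real.sign y *
        (Real.sqrt (2 * Real.pi))⁻¹ * Real.exp (-(x - y) ^ 2 / 2))
        (fun y : ℝ => -g (x - y)) (Iio 0) := by
      intro y hy
      have hy' : y < 0 := hy
      have hmax : max 0 (x * y) = 0 := max_eq_left (le_of_lt (mul_neg_of_pos_of_neg hx hy'))
      simp only [hmax, mul_zero, Real.exp_zero, Real.sign_of_neg hy', g]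
      ring
    rw [setIntegral_congr_fun measurableSet_Iio e, integral_neg, int_Iio_g_shift]
  have h2 : ∫ y in Ioi (0 : ℝ), Real.exp (-2 * m * max 0 (x * y)) * Real.sign y *
      (Real.sqrt (2 * Real.pi))⁻¹ * Real.exp (-(x - y) ^ 2 / 2)
      = Real.exp (2 * x ^ 2 * m * ((m : ℝ) - 1)) * Phi (-(2 * (m : ℝ) - 1) * x) := by
    have e : EqOn (fun y : ℝ => Real.exp (-2 * m * max 0 (x * y)) * Real.sign y *
        (Real.sqrt (2 * Real.pi))⁻¹ * Real.exp (-(x - y) ^ 2 / 2))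
        (fun y : ℝ => Real.exp (-2 * m * max 0 (x * y)) * g (x - y)) (Ioi 0) := by
      intro y hy
      have hy' : (0 : ℝ) < y := hy
      simp only [Real.sign_of_pos hy', g]
      ring
    rw [setIntegral_congr_fun measurableSet_Ioi e, int_Ioi_exp m hx]
  rw [h1, h2]; ring

/-- The value of `Khat` for positive `x`. -/
lemma Khat_pos (m : ℕ) {x : ℝ} (hx : 0 < x) :
    Khat m x = Real.exp (2 * x ^ 2 * m * ((m : ℝ) - 1)) * Phi (-(2 * (m : ℝ) - 1) * x)
      + Phi (-x) := by
  have hint := Kint_gen m x (fun _ => Real.sign x) measurable_const (fun _ => sign_abs_le x)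
  rw [Khat, ← intervalIntegral.integral_Iic_add_Ioi (b := (0 : ℝ)) hint.integrableOn hint.integrableOn]
  have h1 : ∫ y in Iic (0 : ℝ), Real.exp (-2 * m * max 0 (x * y)) * Real.sign x *
      (Real.sqrt (2 * Real.pi))⁻¹ * Real.exp (-(x - y) ^ 2 / 2) = Phi (-x) := by
    have e : EqOn (fun y : ℝ => Real.exp (-2 * m * max 0 (x * y)) * Real.sign x *
        (Real.sqrt (2 * Real.pi))⁻¹ * Real.exp (-(x - y) ^ 2 / 2))
        (fun y : ℝ => g (x - y)) (Iic 0) := by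
      intro y hy
      have hy' : y ≤ 0 := hy
      have hmax : max 0 (x * y) = 0 := max_eq_left (mul_nonpos_of_nonneg_of_nonpos hx.le hy')
      simp only [hmax, mul_zero, Real.exp_zero, Real.sign_of_pos hx, g]
      ring
    rw [setIntegral_congr_fun measurableSet_Iic e, integral_Iic_eq_integral_Iio,
      int_Iio_g_shift]
  have h2 : ∫ y in Ioi (0 : ℝ), Real.exp (-2 * m * max 0 (x * y)) * Real.sign x *
      (Real.sqrt (2 * Real.pi))⁻¹ * Real.exp (-(x - y) ^ 2 / 2)
      = Real.exp (2 * x ^ 2 * m * ((m : ℝ) - 1)) * Phi (-(2 * (m : ℝ) - 1) * x) := by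
    have e : EqOn (fun y : ℝ => Real.exp (-2 * m * max 0 (x * y)) * Real.sign x *
        (Real.sqrt (2 * Real.pi))⁻¹ * Real.exp (-(x - y) ^ 2 / 2))
        (fun y : ℝ => Real.exp (-2 * m * max 0 (x * y)) * g (x - y)) (Ioi 0) := by
      intro y _
      simp only [Real.sign_of_pos hx, g]
      ring
    rw [setIntegral_congr_fun measurableSet_Ioi e, int_Ioi_exp m hx]
  rw [h1, h2, add_comm]

lemma Kfun_neg_eq (m : ℕ) (x : ℝ) : Kfun m (-x) = -Kfun m x := by
  have key : ∀ y : ℝ, Real.exp (-2 * m * max 0 (-x * -y)) * Real.sign (-y) *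
      (Real.sqrt (2 * Real.pi))⁻¹ * Real.exp (-(-x - -y) ^ 2 / 2)
      = -(Real.exp (-2 * m * max 0 (x * y)) * Real.sign y *
        (Real.sqrt (2 * Real.pi))⁻¹ * Real.exp (-(x - y) ^ 2 / 2)) := by
    intro y
    rw [Real.sign_neg, show -x * -y = x * y by ring, show (-x - -y) ^ 2 = (x - y) ^ 2 by ring]
    ring
  calc Kfun m (-x)
      = ∫ y : ℝ, Real.exp (-2 * m * max 0 (-x * -y)) * Real.sign (-y) *
        (Real.sqrt (2 * Real.pi))⁻¹ * Real.exp (-(-x - -y) ^ 2 / 2) :=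
        (integral_neg_eq_self _ _).symm
    _ = ∫ y : ℝ, -(Real.exp (-2 * m * max 0 (x * y)) * Real.sign y *
        (Real.sqrt (2 * Real.pi))⁻¹ * Real.exp (-(x - y) ^ 2 / 2)) := by simp_rw [key]
    _ = -Kfun m x := integral_neg _

lemma Khat_neg_eq (m : ℕ) (x : ℝ) : Khat m (-x) = -Khat m x := by
  have key : ∀ y : ℝ, Real.exp (-2 * m * max 0 (-x * -y)) * Real.sign (-x) *
      (Real.sqrt (2 * Real.pi))⁻¹ * Real.exp (-(-x - -y) ^ 2 / 2)
      = -(Real.exp (-2 * m * max 0 (x * y)) * Real.sign x *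
        (Real.sqrt (2 * Real.pi))⁻¹ * Real.exp (-(x - y) ^ 2 / 2)) := by
    intro y
    rw [Real.sign_neg, show -x * -y = x * y by ring, show (-x - -y) ^ 2 = (x - y) ^ 2 by ring]
    ring
  calc Khat m (-x)
      = ∫ y : ℝ, Real.exp (-2 * m * max 0 (-x * -y)) * Real.sign (-x) *
        (Real.sqrt (2 * Real.pi))⁻¹ * Real.exp (-(-x - -y) ^ 2 / 2) :=
        (integral_neg_eq_self _ _).symm
    _ = ∫ y : ℝ, -(Real.exp (-2 * m * max 0 (x * y)) * Real.sign x *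
        (Real.sqrt (2 * Real.pi))⁻¹ * Real.exp (-(x - y) ^ 2 / 2)) := by simp_rw [key]
    _ = -Khat m x := integral_neg _

lemma Kfun_zero (m : ℕ) : Kfun m 0 = 0 := by
  have key : ∀ y : ℝ, Real.exp (-2 * m * max 0 ((0 : ℝ) * -y)) * Real.sign (-y) *
      (Real.sqrt (2 * Real.pi))⁻¹ * Real.exp (-((0 : ℝ) - -y) ^ 2 / 2)
      = -(Real.exp (-2 * m * max 0 ((0 : ℝ) * y)) * Real.sign y *
        (Real.sqrt (2 * Real.pi))⁻¹ * Real.exp (-((0 : ℝ) - y) ^ 2 / 2)) := by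
    intro y
    rw [Real.sign_neg, show (0 : ℝ) * -y = 0 * y by ring,
      show ((0 : ℝ) - -y) ^ 2 = ((0 : ℝ) - y) ^ 2 by ring]
    ring
  have h : Kfun m 0 = -Kfun m 0 := by
    calc Kfun m 0
        = ∫ y : ℝ, Real.exp (-2 * m * max 0 ((0 : ℝ) * -y)) * Real.sign (-y) *
          (Real.sqrt (2 * Real.pi))⁻¹ * Real.exp (-((0 : ℝ) - -y) ^ 2 / 2) :=
          (integral_neg_eq_self _ _).symm
      _ = ∫ y : ℝ, -(Real.exp (-2 * m * max 0 ((0 : ℝ) * y)) * Real.sign y *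
          (Real.sqrt (2 * Real.pi))⁻¹ * Real.exp (-((0 : ℝ) - y) ^ 2 / 2)) := by simp_rw [key]
      _ = -Kfun m 0 := integral_neg _
  linarith

lemma Khat_zero (m : ℕ) : Khat m 0 = 0 := by
  rw [Khat]
  simp [Real.sign_zero]

end KAux

theorem K_formulas (m : ℕ) (hm : 1 ≤ m) (hodd : Odd m) (x : ℝ) :
    Kfun m x = Real.sign x * Real.exp (2 * x ^ 2 * m * ((m : ℝ) - 1)) *
        Phi (-(2 * (m : ℝ) - 1) * |x|) - Real.sign x * Phi (-|x|) ∧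
    Khat m x = Real.sign x * Real.exp (2 * x ^ 2 * m * ((m : ℝ) - 1)) *
        Phi (-(2 * (m : ℝ) - 1) * |x|) + Real.sign x * Phi (-|x|) := by
  rcases lt_trichotomy x 0 with hx | hx | hx
  · have hx' : 0 < -x := by linarith
    have hK := KAux.Kfun_pos m hx'
    have hH := KAux.Khat_pos m hx'
    have hKs : Kfun m x = -Kfun m (-x) := by
      rw [← KAux.Kfun_neg_eq m (-x), neg_neg]
    have hHs : Khat m x = -Khat m (-x) := by
      rw [← KAux.Khat_neg_eq m (-x), neg_neg]
    rw [hKs, hHs, hK, hH, Real.sign_of_neg hx, abs_of_neg hx,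
      show (-x) ^ 2 = x ^ 2 by ring]
    constructor <;> ring
  · subst hx
    rw [KAux.Kfun_zero, KAux.Khat_zero, Real.sign_zero]
    constructor <;> ring
  · rw [KAux.Kfun_pos m hx, KAux.Khat_pos m hx, Real.sign_of_pos hx, abs_of_pos hx]
    constructor <;> ring
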